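/- Let (A,B) and (A′,B′) be as in the type-one single column simulation with 4 ≤ K ≤ 8, let 0 ≤ ε < 1/(11n), let (x*,y*) be an ε-WSNE of (A′,B′), and assume the renormalizations defining the translated profile (x,y) are valid (the vectors x′ and y′ have positive sums). Then |xᵀ·B_j − xᵀ·B_{j′}| ≤ 48·n·ε for all columns j, j′ of B with y_j > 0 and y_{j′} > 0. -/

import Mathlib

/-!
Write `X` for the mass of `x*` on the encoding rows. Each column `j` of `B` has a copy in `B′`
(`cb₂ʲ` for `j < k`) whose payoff against `x*` is `X · xᵀB_j`. If the translated strategy plays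
`j`, then `y*` plays the copy (for `j < k` this is where the gadget rows and the threshold `11ε`
enter), so the `X`-scaled payoffs of two played columns are within `ε` and it suffices that
`X ≥ 1/(33n)`. Every row of `B′` has an entry `≥ 1`, so some column of `B′` earns at least
`1/(2k+nr) ≥ 1/(3n)`; a played copy earns at most `8X` yet is `ε`-optimal, so
`8X + ε ≥ 1/(3n)`, and `ε < 1/(11n)` gives the bound.
-/

open Finset
open scoped Classical

/-- `(x, y)` is an `ε`-well-supported Nash equilibrium of the bimatrix game with
`nr` rows, `nc` columns and payoff matrices `A` (row player) and `B` (column player). -/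
def IsWSNE (nr nc : ℕ) (A B : ℕ → ℕ → ℝ) (x y : ℕ → ℝ) (ε : ℝ) : Prop :=
  (∀ i, 0 ≤ x i) ∧ (∀ i, nr ≤ i → x i = 0) ∧ (∑ i ∈ range nr, x i = 1) ∧
  (∀ j, 0 ≤ y j) ∧ (∀ j, nc ≤ j → y j = 0) ∧ (∑ j ∈ range nc, y j = 1) ∧
  (∀ i < nr, 0 < x i → ∀ i' < nr,
    ∑ j ∈ range nc, A i j * y j ≥ ∑ j ∈ range nc, A i' j * y j - ε) ∧
  (∀ j < nc, 0 < y j → ∀ j' < nc,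
    ∑ i ∈ range nr, x i * B i j ≥ ∑ i ∈ range nr, x i * B i j' - ε)

/-- Input assumptions of the type-one single column simulation: `(A,B)` has at most
`n` rows and columns (`nr` rows, `nc` columns), all entries in `[0,K]`, every row
and column of `A` and `B` has an entry `≥ 1`, the columns of `A` containing `K` are
exactly the columns `j < k`, each such column contains exactly one `K`, its other
non-zero entries lie in `{1,2}` and are either at most two values from `{1,2}` or
at most three `1`s. -/
def Scs1Input (n nr nc k : ℕ) (K : ℝ) (A B : ℕ → ℕ → ℝ) : Prop :=
  nr ≤ n ∧ nc ≤ n ∧ k ≤ nc ∧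
  (∀ i < nr, ∀ j < nc, 0 ≤ A i j ∧ A i j ≤ K) ∧
  (∀ i < nr, ∀ j < nc, 0 ≤ B i j ∧ B i j ≤ K) ∧
  (∀ i < nr, ∃ j < nc, 1 ≤ A i j) ∧ (∀ j < nc, ∃ i < nr, 1 ≤ A i j) ∧
  (∀ i < nr, ∃ j < nc, 1 ≤ B i j) ∧ (∀ j < nc, ∃ i < nr, 1 ≤ B i j) ∧
  (∀ j < k,
    ((range nr).filter fun i => A i j = K).card = 1 ∧
    (∀ i < nr, A i j = 0 ∨ A i j = 1 ∨ A i j = 2 ∨ A i j = K) ∧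
    (((range nr).filter fun i => A i j = 1 ∨ A i j = 2).card ≤ 2 ∨
      (((range nr).filter fun i => A i j = 1).card ≤ 3 ∧ ∀ i < nr, A i j ≠ 2))) ∧
  (∀ j, k ≤ j → j < nc → ∀ i < nr, A i j ≠ K)

/-- The row player's payoff matrix `A'` of the type-one single column simulation.
It has `2k + nr` rows and `2k + nc` columns.  For each `j < k`: the block
`(rbʲ, cb₁ʲ) = ({2j,2j+1}, {3j,3j+1})` equals `S = [[2,0],[0,1]]`, the block
`(rbʲ, cb₂ʲ) = ({2j,2j+1}, {3j+2})` is all ones, and the block `(rb_e, cb₁ʲ)`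
equals `encode(A_j)` (each `1` of column `A_j` kept as a `1` in the first column,
each `2` replaced by a `1` in the second column, the `K` replaced by `K/2` in the
second column).  Columns `c ≥ 3k` restricted to `rb_e` equal the columns
`A_{k}, …, A_{nc-1}`; all other entries are `0`. -/
noncomputable def scs1A (k : ℕ) (K : ℝ) (A : ℕ → ℕ → ℝ) : ℕ → ℕ → ℝ := fun r c =>
  if r < 2*k then
    if c = 3*(r/2) then (if r % 2 = 0 then 2 else 0)
    else if c = 3*(r/2) + 1 then (if r % 2 = 0 then 0 else 1)
    else if c = 3*(r/2) + 2 then 1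
    else 0
  else
    if c < 3*k then
      (if c % 3 = 0 then (if A (r - 2*k) (c/3) = 1 then 1 else 0)
       else if c % 3 = 1 then
         (if A (r - 2*k) (c/3) = K then K/2
          else if A (r - 2*k) (c/3) = 2 then 1 else 0)
       else 0)
    else A (r - 2*k) (c - 2*k)

/-- The column player's payoff matrix `B'` of the type-one single column
simulation: for `j < k` the block `(rbʲ, cb₁ʲ)` equals `T = [[0,1],[1,0]]` and the
block `(rb_e, cb₂ʲ)` equals column `B_j`; columns `c ≥ 3k` restricted to `rb_e`
equal the columns `B_k, …, B_{nc-1}`; all other entries are `0`. -/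
noncomputable def scs1B (k : ℕ) (B : ℕ → ℕ → ℝ) : ℕ → ℕ → ℝ := fun r c =>
  if r < 2*k then
    if c = 3*(r/2) then (if r % 2 = 0 then 0 else 1)
    else if c = 3*(r/2) + 1 then (if r % 2 = 0 then 1 else 0)
    else 0
  else
    if c < 3*k then (if c % 3 = 2 then B (r - 2*k) (c/3) else 0)
    else B (r - 2*k) (c - 2*k)

/-- The (un-normalized) translated column strategy `y'`: for `j < k`,
`y'_j = y*_{3j}` if `P(cb₁ʲ) ≥ 11ε` and `0` otherwise; for `j ≥ k`,
`y'_j = y*_{3k + (j-k)}`. -/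
noncomputable def scs1Y (k : ℕ) (ε : ℝ) (ystar : ℕ → ℝ) : ℕ → ℝ := fun j =>
  if j < k then (if 11 * ε ≤ ystar (3*j) + ystar (3*j+1) then ystar (3*j) else 0)
  else ystar (2*k + j)

lemma one_le_mul_of_forall_sum_mul_le {R C : ℕ} {M : ℕ → ℕ → ℝ} {x : ℕ → ℝ} {P : ℝ}
    (hx : ∀ r, 0 ≤ x r) (hsum : ∑ r ∈ range R, x r = 1)
    (hM : ∀ r < R, ∀ c < C, 0 ≤ M r c) (hrow : ∀ r < R, ∃ c < C, 1 ≤ M r c)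
    (hP : ∀ c < C, ∑ r ∈ range R, x r * M r c ≤ P) : 1 ≤ R * P := by
  have hxP : ∀ r ∈ range R, x r ≤ P := by
    intro r hr
    obtain ⟨c, hc, hMc⟩ := hrow r (mem_range.mp hr)
    calc x r ≤ x r * M r c := le_mul_of_one_le_right (hx r) hMc
      _ ≤ ∑ r' ∈ range R, x r' * M r' c :=
          single_le_sum (fun r' hr' => mul_nonneg (hx r') (hM r' (mem_range.mp hr') c hc)) hr
      _ ≤ P := hP c hc
  calc (1 : ℝ) = ∑ r ∈ range R, x r := hsum.symm
    _ ≤ ∑ _r ∈ range R, P := sum_le_sum hxP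
    _ = R * P := by rw [sum_const, card_range, nsmul_eq_mul]

namespace IsWSNE

variable {nr nc : ℕ} {A B : ℕ → ℕ → ℝ} {x y : ℕ → ℝ} {ε : ℝ}

lemma abs_sub_payoff_le (h : IsWSNE nr nc A B x y ε) {c c' : ℕ} (hc : c < nc) (hc' : c' < nc)
    (hyc : 0 < y c) (hyc' : 0 < y c') :
    |∑ r ∈ range nr, x r * B r c - ∑ r ∈ range nr, x r * B r c'| ≤ ε := by
  obtain ⟨-, -, -, -, -, -, -, hcol⟩ := h
  rw [abs_le]
  constructor <;> linarith [hcol c hc hyc c' hc', hcol c' hc' hyc' c hc]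

lemma one_le_mul_payoff_add (h : IsWSNE nr nc A B x y ε) (hB : ∀ r < nr, ∀ c < nc, 0 ≤ B r c)
    (hrow : ∀ r < nr, ∃ c < nc, 1 ≤ B r c) {c : ℕ} (hc : c < nc) (hyc : 0 < y c) :
    1 ≤ nr * (∑ r ∈ range nr, x r * B r c + ε) := by
  obtain ⟨hx, -, hxsum, -, -, -, -, hcol⟩ := h
  exact one_le_mul_of_forall_sum_mul_le hx hxsum hB hrow fun c' hc' => by
    linarith [hcol c hc hyc c' hc']

end IsWSNE

/-- The column of `scs1B` that carries column `j` of `B`: `cb₂ʲ` for `j < k`. -/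
def scs1Col (k j : ℕ) : ℕ := if j < k then 3*j+2 else 2*k+j

section Simulation

variable {k nr nc : ℕ} {K : ℝ} {A B : ℕ → ℕ → ℝ}

lemma scs1Col_lt {j : ℕ} (hj : j < nc) : scs1Col k j < 2*k+nc := by
  unfold scs1Col; split_ifs <;> omega

lemma scs1B_scs1Col_of_lt {r : ℕ} (j : ℕ) (hr : r < 2*k) : scs1B k B r (scs1Col k j) = 0 := by
  unfold scs1B scs1Col; split_ifs <;> first | rfl | omega

lemma scs1B_add_scs1Col (i j : ℕ) : scs1B k B (2*k+i) (scs1Col k j) = B i j := by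
  unfold scs1B scs1Col; split_ifs <;> first | omega | congr 1 <;> omega

lemma sum_mul_scs1B_scs1Col (x : ℕ → ℝ) (j : ℕ) :
    ∑ r ∈ range (2*k+nr), x r * scs1B k B r (scs1Col k j) =
      ∑ i ∈ range nr, x (2*k+i) * B i j := by
  rw [sum_range_add, sum_eq_zero fun r hr => by
    rw [scs1B_scs1Col_of_lt j (mem_range.mp hr), mul_zero], zero_add]
  simp only [scs1B_add_scs1Col]

lemma sum_mul_scs1B_three_mul (x : ℕ → ℝ) {j : ℕ} (hj : j < k) :
    ∑ r ∈ range (2*k+nr), x r * scs1B k B r (3*j) = x (2*j+1) := by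
  rw [sum_eq_single (2*j+1)]
  · unfold scs1B; split_ifs <;> first | omega | exact mul_one _
  · intro r _ hr
    unfold scs1B; split_ifs <;> first | omega | exact mul_zero _
  · intro h; exact absurd (mem_range.mpr (by omega)) h

lemma scs1B_nonneg (hk : k ≤ nc) (hB : ∀ i < nr, ∀ j < nc, 0 ≤ B i j) {r c : ℕ}
    (hr : r < 2*k+nr) (hc : c < 2*k+nc) : 0 ≤ scs1B k B r c := by
  unfold scs1B; split_ifs <;> first | (apply hB <;> omega) | norm_num

lemma exists_one_le_scs1B (hk : k ≤ nc) (hB : ∀ i < nr, ∃ j < nc, 1 ≤ B i j) {r : ℕ}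
    (hr : r < 2*k+nr) : ∃ c < 2*k+nc, 1 ≤ scs1B k B r c := by
  by_cases hrk : r < 2*k
  · rcases Nat.even_or_odd' r with ⟨j, rfl | rfl⟩
    · refine ⟨3*j+1, by omega, ?_⟩
      unfold scs1B; split_ifs <;> first | omega | norm_num
    · refine ⟨3*j, by omega, ?_⟩
      unfold scs1B; split_ifs <;> first | omega | norm_num
  · obtain ⟨i, rfl⟩ : ∃ i, r = 2*k+i := ⟨r - 2*k, by omega⟩
    obtain ⟨j, hj, hBj⟩ := hB i (by omega)
    exact ⟨scs1Col k j, scs1Col_lt hj, by rwa [scs1B_add_scs1Col]⟩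

lemma IsWSNE.one_le_mul_sum_mul_scs1B_add {n : ℕ} {A' : ℕ → ℕ → ℝ} {x y : ℕ → ℝ} {ε : ℝ}
    (hin : Scs1Input n nr nc k K A B)
    (h : IsWSNE (2*k+nr) (2*k+nc) A' (scs1B k B) x y ε) {c : ℕ} (hc : c < 2*k+nc)
    (hyc : 0 < y c) :
    1 ≤ ((2*k+nr : ℕ) : ℝ) * (∑ r ∈ range (2*k+nr), x r * scs1B k B r c + ε) := by
  obtain ⟨-, -, hk, -, hB, -, -, hBrow, -⟩ := hin
  exact h.one_le_mul_payoff_add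
    (fun r hr c hc => scs1B_nonneg hk (fun i hi j hj => (hB i hi j hj).1) hr hc)
    (fun r hr => exists_one_le_scs1B hk hBrow hr) hc hyc

lemma sum_scs1A_two_mul_mul (y : ℕ → ℝ) {j : ℕ} (hj : j < k) (hk : k ≤ nc) :
    ∑ c ∈ range (2*k+nc), scs1A k K A (2*j) c * y c = 2 * y (3*j) + y (3*j+2) := by
  rw [sum_eq_add_of_mem (3*j) (3*j+2) (mem_range.mpr (by omega)) (mem_range.mpr (by omega))
    (by omega)]
  · simp only [scs1A, if_pos (show 2*j < 2*k by omega)]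
    split_ifs <;> first | omega | ring
  · intro c _ hc
    simp only [scs1A, if_pos (show 2*j < 2*k by omega)]
    split_ifs <;> first | omega | exact zero_mul _

lemma sum_scs1A_two_mul_add_one_mul (y : ℕ → ℝ) {j : ℕ} (hj : j < k) (hk : k ≤ nc) :
    ∑ c ∈ range (2*k+nc), scs1A k K A (2*j+1) c * y c = y (3*j+1) + y (3*j+2) := by
  rw [sum_eq_add_of_mem (3*j+1) (3*j+2) (mem_range.mpr (by omega)) (mem_range.mpr (by omega))
    (by omega)]
  · simp only [scs1A, if_pos (show 2*j+1 < 2*k by omega)]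
    split_ifs <;> first | omega | ring
  · intro c _ hc
    simp only [scs1A, if_pos (show 2*j+1 < 2*k by omega)]
    split_ifs <;> first | omega | exact zero_mul _

lemma scs1A_add_nonneg (hK : 0 ≤ K) (hk : k ≤ nc) (hA : ∀ i < nr, ∀ j < nc, 0 ≤ A i j)
    {i c : ℕ} (hi : i < nr) (hc : c < 2*k+nc) : 0 ≤ scs1A k K A (2*k+i) c := by
  unfold scs1A; split_ifs <;> first | omega | (apply hA <;> omega) | positivity

lemma div_two_mul_le_sum_scs1A (hK : 0 ≤ K) (hk : k ≤ nc) (hA : ∀ i < nr, ∀ j < nc, 0 ≤ A i j)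
    {y : ℕ → ℝ} (hy : ∀ c, 0 ≤ y c) {i j : ℕ} (hi : i < nr) (hj : j < k) (hAij : A i j = K) :
    K/2 * y (3*j+1) ≤ ∑ c ∈ range (2*k+nc), scs1A k K A (2*k+i) c * y c := by
  have hentry : scs1A k K A (2*k+i) (3*j+1) = K/2 := by
    unfold scs1A
    rw [if_neg (by omega), if_pos (by omega), if_neg (by omega), if_pos (by omega),
      show (3*j+1)/3 = j by omega, show 2*k+i - 2*k = i by omega, if_pos hAij]
  rw [← hentry]
  exact single_le_sum (f := fun c => scs1A k K A (2*k+i) c * y c)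
    (fun c hc => mul_nonneg (scs1A_add_nonneg hK hk hA hi (mem_range.mp hc)) (hy c))
    (mem_range.mpr (by omega))

lemma scs1Y_nonneg {ε : ℝ} {y : ℕ → ℝ} (hy : ∀ c, 0 ≤ y c) (j : ℕ) : 0 ≤ scs1Y k ε y j := by
  unfold scs1Y; split_ifs <;> first | rfl | exact hy _

/-- Column `3j` is played and pays `x (2j+1)`, so row `2j+1` is played. Being `ε`-optimal
against row `2j` and against the encoding row holding the `K` of column `j`, it forces
`y (3j+1) ≳ 2 y (3j)` and `y (3j+2) ≳ y (3j+1)` (as `K/2 ≥ 2`). -/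
lemma pos_scs1Col_of_scs1Y_pos {n : ℕ} {ε : ℝ} {x y : ℕ → ℝ} (hK4 : 4 ≤ K)
    (hin : Scs1Input n nr nc k K A B) (hε : (2*k+nr : ℕ) * ε < 1)
    (hwsne : IsWSNE (2*k+nr) (2*k+nc) (scs1A k K A) (scs1B k B) x y ε)
    {j : ℕ} (hY : 0 < scs1Y k ε y j) : 0 < y (scs1Col k j) := by
  obtain ⟨-, -, hk, hA, -, -, -, -, -, hKcol, -⟩ := id hin
  unfold scs1Y at hY
  unfold scs1Col
  split_ifs at hY ⊢ with hjk hmass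
  · have hx : 0 < x (2*j+1) := by
      have h := hwsne.one_le_mul_sum_mul_scs1B_add hin (c := 3*j) (by omega) hY
      rw [sum_mul_scs1B_three_mul x hjk] at h
      by_contra! hx
      nlinarith
    obtain ⟨-, -, -, hy, -, -, hrow, -⟩ := hwsne
    obtain ⟨i, hi⟩ := card_eq_one.mp (hKcol j hjk).1
    obtain ⟨hir, hiK⟩ : i < nr ∧ A i j = K := by
      simpa using (hi ▸ mem_singleton_self i : i ∈ (range nr).filter fun i => A i j = K)
    have h1 := hrow (2*j+1) (by omega) hx (2*j) (by omega)
    have h2 := hrow (2*j+1) (by omega) hx (2*k+i) (by omega)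
    rw [sum_scs1A_two_mul_add_one_mul y hjk hk, sum_scs1A_two_mul_mul y hjk hk] at h1
    rw [sum_scs1A_two_mul_add_one_mul y hjk hk] at h2
    have h3 := div_two_mul_le_sum_scs1A (by linarith) hk (fun i hi j hj => (hA i hi j hj).1) hy
      hir hjk hiK
    have h4 : 2 * y (3*j+1) ≤ K/2 * y (3*j+1) := by nlinarith [hy (3*j+1)]
    linarith
  · exact absurd hY (lt_irrefl 0)
  · exact hY

lemma one_le_mul_sum_encoding {n : ℕ} {ε : ℝ} {x y : ℕ → ℝ}
    (hK8 : K ≤ 8) (hin : Scs1Input n nr nc k K A B) (hε : 11 * n * ε < 1)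
    (hwsne : IsWSNE (2*k+nr) (2*k+nc) (scs1A k K A) (scs1B k B) x y ε) {j : ℕ} (hj : j < nc)
    (hyj : 0 < y (scs1Col k j)) :
    1 ≤ 33 * n * ∑ i ∈ range nr, x (2*k+i) := by
  obtain ⟨hnr, hnc, hk, -, hB, -⟩ := id hin
  have h1 := hwsne.one_le_mul_sum_mul_scs1B_add hin (scs1Col_lt hj) hyj
  rw [sum_mul_scs1B_scs1Col] at h1
  have h2 : ∑ i ∈ range nr, x (2*k+i) * B i j ≤ 8 * ∑ i ∈ range nr, x (2*k+i) := by
    rw [mul_sum]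
    exact sum_le_sum fun i hi => by
      nlinarith [hwsne.1 (2*k+i), (hB i (mem_range.mp hi) j hj).2]
  have hN : ((2*k+nr : ℕ) : ℝ) ≤ 3 * n := by exact_mod_cast (by omega : 2*k+nr ≤ 3*n)
  have hpay := pos_of_mul_pos_right (one_pos.trans_le h1) (Nat.cast_nonneg _)
  have h3 : 1 ≤ 3 * n * (8 * ∑ i ∈ range nr, x (2*k+i) + ε) :=
    h1.trans (mul_le_mul hN (by linarith) hpay.le (by positivity))
  linarith

end Simulation

theorem stmt12 (n nr nc k : ℕ) (K ε : ℝ) (A B : ℕ → ℕ → ℝ) (xstar ystar : ℕ → ℝ)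
    (hK4 : 4 ≤ K) (hK8 : K ≤ 8)
    (hin : Scs1Input n nr nc k K A B)
    (hε0 : 0 ≤ ε) (hε : ε < 1 / (11 * (n:ℝ)))
    (hwsne : IsWSNE (2*k+nr) (2*k+nc) (scs1A k K A) (scs1B k B) xstar ystar ε) :
    ∀ j < nc, ∀ j' < nc,
      0 < scs1Y k ε ystar j / ∑ j'' ∈ range nc, scs1Y k ε ystar j'' →
      0 < scs1Y k ε ystar j' / ∑ j'' ∈ range nc, scs1Y k ε ystar j'' →
      |(∑ i ∈ range nr, (xstar (2*k+i) / ∑ i' ∈ range nr, xstar (2*k+i')) * B i j) -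
       (∑ i ∈ range nr, (xstar (2*k+i) / ∑ i' ∈ range nr, xstar (2*k+i')) * B i j')| ≤
        48 * (n:ℝ) * ε := by
  intro j hj j' hj' hyj hyj'
  obtain ⟨hnr, hnc, hk, -⟩ := id hin
  have hn : (0 : ℝ) < n := by exact_mod_cast (show 0 < n by omega)
  have h11 : 11 * n * ε < 1 := by rwa [lt_div_iff₀ (by positivity), mul_comm] at hε
  have hN : ((2*k+nr : ℕ) : ℝ) * ε < 1 := by
    have : ((2*k+nr : ℕ) : ℝ) ≤ 3 * n := by exact_mod_cast (show 2*k+nr ≤ 3*n by omega)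
    nlinarith
  have hsupp : ∀ j, 0 < scs1Y k ε ystar j / ∑ j'' ∈ range nc, scs1Y k ε ystar j'' →
      0 < ystar (scs1Col k j) := fun j h =>
    pos_scs1Col_of_scs1Y_pos hK4 hin hN hwsne <|
      (scs1Y_nonneg hwsne.2.2.2.1 j).lt_of_ne fun h0 => by simp [← h0] at h
  have hclose := hwsne.abs_sub_payoff_le (scs1Col_lt hj) (scs1Col_lt hj') (hsupp j hyj)
    (hsupp j' hyj')
  rw [sum_mul_scs1B_scs1Col, sum_mul_scs1B_scs1Col] at hclose
  have hX := one_le_mul_sum_encoding hK8 hin h11 hwsne hj (hsupp j hyj)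
  set X := ∑ i ∈ range nr, xstar (2*k+i)
  have hXpos : 0 < X := by nlinarith
  simp only [div_mul_eq_mul_div, ← sum_div, ← sub_div, abs_div, abs_of_pos hXpos]
  rw [div_le_iff₀ hXpos]
  calc _ ≤ ε := hclose
    _ ≤ 48 * n * ε * X := by nlinarith
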